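/- arXiv:2403.09231 — 5 statements merged into one kernel-verified Lean document; each statement's English description precedes it below -/
import Mathlib

section
/- In any quasigroup A, (u·v)^{-1} = v^{-1}·u^{-1} for all u, v ∈ A. -/
/-- A quasigroup (IP loop): unital product with two-sided inverse property. -/
structure Quasigroup (A : Type*) where
  mul : A → A → A
  e : A
  inv : A → A
  e_mul : ∀ u, mul e u = u
  mul_e : ∀ u, mul u e = u
  inv_mul_cancel : ∀ u v, mul (inv u) (mul u v) = v
  mul_inv_cancel : ∀ u v, mul (mul v u) (inv u) = v

namespace Quasigroup

variable {A : Type*} (Q : Quasigroup A)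

theorem eq_inv_mul_of_mul_eq {v x y : A} (h : Q.mul v x = y) : x = Q.mul (Q.inv v) y := by
  rw [← h, Q.inv_mul_cancel]

theorem mul_inv_mul_eq_inv (u v : A) : Q.mul v (Q.inv (Q.mul u v)) = Q.inv u := by
  simpa only [Q.inv_mul_cancel] using Q.mul_inv_cancel (Q.mul u v) (Q.inv u)

end Quasigroup

/-- In any quasigroup, `(u·v)⁻¹ = v⁻¹·u⁻¹`. -/
theorem quasigroup_inv_mul {A : Type*} (Q : Quasigroup A) (u v : A) :
    Q.inv (Q.mul u v) = Q.mul (Q.inv v) (Q.inv u) :=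
  Q.eq_inv_mul_of_mul_eq (Q.mul_inv_mul_eq_inv u v)
end

section
/- In a quasigroupoid A, λ(a•b) = λ(b)•λ(a) for all composable arrows a, b (with s(a) = t(b)). -/
/-- A quasigroupoid: objects `O`, arrows `A`, with a partial product `mul`
(meaningful on composable pairs, i.e. when `s a = t b`) and inverse map `inv`.
All axioms involving the product are guarded by composability hypotheses. -/
structure Quasigroupoid (O : Type*) (A : Type*) where
  s : A → O
  t : A → O
  e : O → A
  inv : A → A
  mul : A → A → A
  s_e : ∀ x, s (e x) = x
  t_e : ∀ x, t (e x) = x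
  e_mul : ∀ a, mul (e (t a)) a = a
  mul_e : ∀ a, mul a (e (s a)) = a
  s_mul : ∀ a b, s a = t b → s (mul a b) = s b
  t_mul : ∀ a b, s a = t b → t (mul a b) = t a
  inv_comp_left : ∀ a b, s a = t b → s (inv a) = t (mul a b)
  inv_mul_cancel : ∀ a b, s a = t b → mul (inv a) (mul a b) = b
  comp_inv_right : ∀ a b, s a = t b → s (mul a b) = t (inv b)
  mul_inv_cancel : ∀ a b, s a = t b → mul (mul a b) (inv b) = a

/-! As in a group, `λ(a•b)` is pinned down by the two cancellation laws: cancelling on the left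
in `(a•b)•λ(b) = a` gives `λ(a•b)•a = λ(b)`, and cancelling `a` on the right then gives
`λ(a•b) = λ(b)•λ(a)`. -/

namespace Quasigroupoid

variable {O A : Type*} (Q : Quasigroupoid O A)

theorem s_inv (a : A) : Q.s (Q.inv a) = Q.t a := by
  simpa only [Q.mul_e] using Q.inv_comp_left a (Q.e (Q.s a)) (Q.t_e _).symm

variable {Q}

theorem eq_inv_mul_of_mul_eq {a b c : A} (h : Q.s a = Q.t b) (hc : Q.mul a b = c) :
    b = Q.mul (Q.inv a) c := by
  rw [← hc, Q.inv_mul_cancel a b h]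

theorem eq_mul_inv_of_mul_eq {a b c : A} (h : Q.s a = Q.t b) (hc : Q.mul a b = c) :
    a = Q.mul c (Q.inv b) := by
  rw [← hc, Q.mul_inv_cancel a b h]

end Quasigroupoid

/-- In a quasigroupoid, `λ(a•b) = λ(b)•λ(a)` for composable `a`, `b`. -/
theorem quasigroupoid_inv_mul {O A1 : Type*} (Q : Quasigroupoid O A1) (a b : A1)
    (h : Q.s a = Q.t b) :
    Q.inv (Q.mul a b) = Q.mul (Q.inv b) (Q.inv a) := by
  have inv_b : Q.inv b = Q.mul (Q.inv (Q.mul a b)) a :=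
    Quasigroupoid.eq_inv_mul_of_mul_eq (Q.comp_inv_right a b h) (Q.mul_inv_cancel a b h)
  have composable : Q.s (Q.inv (Q.mul a b)) = Q.t a := by rw [Q.s_inv, Q.t_mul a b h]
  exact Quasigroupoid.eq_mul_inv_of_mul_eq composable inv_b.symm
end

section
/- Given a quasigroup A acting on a set X via ψ : A × X → X with ψ(e_A, x) = x and ψ(a·b, x) = ψ(a, ψ(b, x)), the structure B with B₀ = X, B₁ = A × X, s(a,x) = x, t(a,x) = ψ(a,x), id(x) = (e_A, x), product (a,x)⋆(b,y) = (a·b, y) defined when ψ(b,y) = x, and inverse λ(a,x) = (a^{-1}, ψ(a,x)), is a quasigroupoid. -/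
namespace Quasigroup

variable {A X : Type*} (Q : Quasigroup A)

theorem inv_mul_self (u : A) : Q.mul (Q.inv u) u = Q.e := by
  simpa only [Q.mul_e] using Q.inv_mul_cancel u Q.e

theorem act_inv_act {ψ : A → X → X} (h1 : ∀ x, ψ Q.e x = x)
    (h2 : ∀ a b x, ψ (Q.mul a b) x = ψ a (ψ b x)) (a : A) (x : X) :
    ψ (Q.inv a) (ψ a x) = x := by
  rw [← h2, Q.inv_mul_self, h1]

def actionQuasigroupoid (ψ : A → X → X) (h1 : ∀ x, ψ Q.e x = x)
    (h2 : ∀ a b x, ψ (Q.mul a b) x = ψ a (ψ b x)) : Quasigroupoid X (A × X) where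
  s p := p.2
  t p := ψ p.1 p.2
  e x := (Q.e, x)
  inv p := (Q.inv p.1, ψ p.1 p.2)
  mul p q := (Q.mul p.1 q.1, q.2)
  s_e _ := rfl
  t_e := h1
  e_mul _ := by rw [Q.e_mul]
  mul_e _ := by rw [Q.mul_e]
  s_mul _ _ _ := rfl
  t_mul p q hpq := by simp only [h2, hpq]
  inv_comp_left p q hpq := by simp only [h2, hpq]
  inv_mul_cancel _ _ _ := by simp only [Q.inv_mul_cancel]
  comp_inv_right _ q _ := (Q.act_inv_act h1 h2 q.1 q.2).symm
  mul_inv_cancel p q hpq := by simp only [Q.mul_inv_cancel, ← hpq]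

end Quasigroup

/-- The structure associated to an action `ψ` of a quasigroup on a set `X`
(objects `X`, arrows `A × X`, source `(a,x) ↦ x`, target `(a,x) ↦ ψ a x`,
identities `x ↦ (e,x)`, product `(a,x)⋆(b,y) = (a·b, y)` on composable pairs,
inverse `(a,x) ↦ (a⁻¹, ψ a x)`) is a quasigroupoid. -/
theorem action_quasigroupoid {A X : Type*} (Q : Quasigroup A) (ψ : A → X → X)
    (h1 : ∀ x, ψ Q.e x = x) (h2 : ∀ a b x, ψ (Q.mul a b) x = ψ a (ψ b x)) :
    ∃ B : Quasigroupoid X (A × X),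
      (∀ p, B.s p = p.2) ∧
      (∀ p, B.t p = ψ p.1 p.2) ∧
      (∀ x, B.e x = (Q.e, x)) ∧
      (∀ p, B.inv p = (Q.inv p.1, ψ p.1 p.2)) ∧
      (∀ p q : A × X, ψ q.1 q.2 = p.2 → B.mul p q = (Q.mul p.1 q.1, q.2)) :=
  ⟨Q.actionQuasigroupoid ψ h1 h2, fun _ => rfl, fun _ => rfl, fun _ => rfl, fun _ => rfl,
    fun _ _ _ => rfl⟩
end

section
/- Let (A, H) be a matched pair of quasigroupoids. Then λ_A(φ_A(h,a)) = φ_A(φ_H(h,a), λ_A(a)) for all (h,a) with s_H(h) = t_A(a). -/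
/-- A matched pair of quasigroupoids with common base `O`:
a left action `φA` of `H` on `A` and a right action `φH` of `A` on `H`
satisfying the module conditions and the matched pair compatibilities. -/
structure IsMatchedPair {O A1 H1 : Type*} (A : Quasigroupoid O A1) (H : Quasigroupoid O H1)
    (φA : H1 → A1 → A1) (φH : H1 → A1 → H1) : Prop where
  t_act : ∀ h a, H.s h = A.t a → A.t (φA h a) = H.t h
  act_mul : ∀ g h a, H.s g = H.t h → H.s h = A.t a → φA (H.mul g h) a = φA g (φA h a)
  act_id : ∀ a, φA (H.e (A.t a)) a = a
  s_act : ∀ h a, H.s h = A.t a → H.s (φH h a) = A.s a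
  actH_mul : ∀ h a b, H.s h = A.t a → A.s a = A.t b → φH h (A.mul a b) = φH (φH h a) b
  actH_id : ∀ h, φH h (A.e (H.s h)) = h
  compat_st : ∀ h a, H.s h = A.t a → A.s (φA h a) = H.t (φH h a)
  compat_mulA : ∀ h a b, H.s h = A.t a → A.s a = A.t b →
    φA h (A.mul a b) = A.mul (φA h a) (φA (φH h a) b)
  compat_mulH : ∀ g h a, H.s g = H.t h → H.s h = A.t a →
    φH (H.mul g h) a = H.mul (φH g (φA h a)) (φH h a)

/-!
Applying `compat_mulA` to `a • λ_A a = e (s h)` and using that `φA h` sends identities to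
identities shows that `φA (φH h a) (λ_A a)` is a right inverse of `φA h a`; right inverses in
a quasigroupoid are unique.
-/

namespace Quasigroupoid

variable {O A1 : Type*} (A : Quasigroupoid O A1)

lemma t_inv (a : A1) : A.t (A.inv a) = A.s a := by
  simpa only [A.e_mul] using (A.comp_inv_right (A.e (A.t a)) a (A.s_e _)).symm

lemma mul_inv_self (a : A1) : A.mul a (A.inv a) = A.e (A.t a) := by
  simpa only [A.e_mul] using A.mul_inv_cancel (A.e (A.t a)) a (A.s_e _)

lemma s_inv_s9 (a : A1) : A.s (A.inv a) = A.t a := by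
  simpa only [A.mul_e] using A.inv_comp_left a (A.e (A.s a)) (A.t_e _).symm

lemma e_mul_e (x : O) : A.mul (A.e x) (A.e x) = A.e x := by
  simpa only [A.t_e] using A.e_mul (A.e x)

variable {A}

lemma eq_e_of_mul_eq_right {x y : A1} (hxy : A.s x = A.t y) (h : A.mul x y = y) :
    x = A.e (A.t y) := by
  simpa only [h, A.mul_inv_self] using (A.mul_inv_cancel x y hxy).symm

lemma eq_inv_of_mul_eq_e_right {x y : A1} (hxy : A.s x = A.t y)
    (h : A.mul x y = A.e (A.t x)) : y = A.inv x := by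
  simpa only [h, ← A.s_inv_s9 x, A.mul_e] using (A.inv_mul_cancel x y hxy).symm

end Quasigroupoid

namespace IsMatchedPair

variable {O A1 H1 : Type*} {A : Quasigroupoid O A1} {H : Quasigroupoid O H1}
  {φA : H1 → A1 → A1} {φH : H1 → A1 → H1}

/-- Applying `compat_mulA` to `e • e` shows that `φA h e` is idempotent, hence an identity. -/
lemma act_e (hmp : IsMatchedPair A H φA φH) (h : H1) :
    φA h (A.e (H.s h)) = A.e (H.t h) := by
  have hcomp : H.s h = A.t (A.e (H.s h)) := (A.t_e _).symm
  have ht : A.t (φA h (A.e (H.s h))) = H.t h := hmp.t_act _ _ hcomp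
  have hs : A.s (φA h (A.e (H.s h))) = H.t h := by
    simpa only [hmp.actH_id] using hmp.compat_st _ _ hcomp
  have hidem := hmp.compat_mulA h (A.e (H.s h)) (A.e (H.s h)) hcomp (by rw [A.s_e, A.t_e])
  rw [A.e_mul_e, hmp.actH_id] at hidem
  rw [← ht]
  exact Quasigroupoid.eq_e_of_mul_eq_right (hs.trans ht.symm) hidem.symm

end IsMatchedPair

/-- For a matched pair of quasigroupoids: `λ_A(φA(h,a)) = φA(φH(h,a), λ_A a)`. -/
theorem matchedPair_inv_act {O A1 H1 : Type*}
    (A : Quasigroupoid O A1) (H : Quasigroupoid O H1)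
    (φA : H1 → A1 → A1) (φH : H1 → A1 → H1)
    (hmp : IsMatchedPair A H φA φH) (h : H1) (a : A1) (hc : H.s h = A.t a) :
    A.inv (φA h a) = φA (φH h a) (A.inv a) := by
  have hmul : A.mul (φA h a) (φA (φH h a) (A.inv a)) = A.e (A.t (φA h a)) := by
    rw [← hmp.compat_mulA h a (A.inv a) hc (A.t_inv a).symm, A.mul_inv_self, ← hc,
      hmp.act_e, hmp.t_act h a hc]
  have hcomp : A.s (φA h a) = A.t (φA (φH h a) (A.inv a)) := by
    rw [hmp.compat_st h a hc, hmp.t_act _ _ (by rw [hmp.s_act h a hc, A.t_inv])]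
  exact (Quasigroupoid.eq_inv_of_mul_eq_e_right hcomp hmul).symm
end

section
/- Let (A, H) be a matched pair of quasigroupoids. The maps i^A : A → A⋈H with i^A₀ = id on A₀ and i^A₁(a) = (a, id_H(s_A(a))), and i^H : H → A⋈H with i^H₀ = id and i^H₁(g) = (id_A(t_H(g)), g), are quasigroupoid monomorphisms; hence A and H are subquasigroupoids of A⋈H. -/
variable {O A1 H1 : Type*}

/-- The canonical inclusion of `A` into the arrows of `A ⋈ H` (first component). -/
def incA (A : Quasigroupoid O A1) (H : Quasigroupoid O H1) (a : A1) : A1 × H1 :=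
  (a, H.e (A.s a))

/-- The canonical inclusion of `H` into the arrows of `A ⋈ H` (second component). -/
def incH (A : Quasigroupoid O A1) (H : Quasigroupoid O H1) (g : H1) : A1 × H1 :=
  (A.e (H.t g), g)

/-- The double cross product `(a,g)·(b,h) = (a • φA(g,b), φH(g,b) ⋆ h)` of `A ⋈ H`
(the formula defining the product of `A ⋈ H` on composable pairs). -/
def dcpMul (A : Quasigroupoid O A1) (H : Quasigroupoid O H1)
    (φA : H1 → A1 → A1) (φH : H1 → A1 → H1) (p q : A1 × H1) : A1 × H1 :=
  (A.mul p.1 (φA p.2 q.1), H.mul (φH p.2 q.1) q.2)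

namespace Quasigroupoid

variable (Q : Quasigroupoid O A1)

theorem e_mul_e_s13 (x : O) : Q.mul (Q.e x) (Q.e x) = Q.e x := by
  simpa only [Q.s_e] using Q.mul_e (Q.e x)

/-- Left cancellation of `x` in `x * x = x * e (s x)`. -/
theorem eq_e_of_mul_self {x : A1} (hst : Q.s x = Q.t x) (hx : Q.mul x x = x) :
    x = Q.e (Q.s x) := by
  have cancel_self := Q.inv_mul_cancel x x hst
  have cancel_e := Q.inv_mul_cancel x (Q.e (Q.s x)) (Q.t_e _).symm
  rw [hx] at cancel_self
  rw [Q.mul_e] at cancel_e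
  exact cancel_self.symm.trans cancel_e

end Quasigroupoid

namespace IsMatchedPair

variable {A : Quasigroupoid O A1} {H : Quasigroupoid O H1}
  {φA : H1 → A1 → A1} {φH : H1 → A1 → H1}

/-- `φH (e, b)` is a loop at `s b` which `compat_mulH` with `e * e = e` shows to be idempotent. -/
theorem actH_e (hmp : IsMatchedPair A H φA φH) (b : A1) :
    φH (H.e (A.t b)) b = H.e (A.s b) := by
  have hcomp : H.s (H.e (A.t b)) = A.t b := H.s_e _
  have hs : H.s (φH (H.e (A.t b)) b) = A.s b := hmp.s_act _ _ hcomp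
  have ht : H.t (φH (H.e (A.t b)) b) = A.s b := by
    rw [← hmp.compat_st _ _ hcomp, hmp.act_id]
  have hidem : H.mul (φH (H.e (A.t b)) b) (φH (H.e (A.t b)) b) = φH (H.e (A.t b)) b := by
    have h := hmp.compat_mulH (H.e (A.t b)) (H.e (A.t b)) b (by rw [H.s_e, H.t_e]) hcomp
    rw [H.e_mul_e_s13, hmp.act_id] at h
    exact h.symm
  rw [H.eq_e_of_mul_self (hs.trans ht.symm) hidem, hs]

/-- `φA (g, e)` is a loop at `t g` which `compat_mulA` with `e * e = e` shows to be idempotent. -/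
theorem actA_e (hmp : IsMatchedPair A H φA φH) (g : H1) :
    φA g (A.e (H.s g)) = A.e (H.t g) := by
  have hcomp : H.s g = A.t (A.e (H.s g)) := (A.t_e _).symm
  have ht : A.t (φA g (A.e (H.s g))) = H.t g := hmp.t_act _ _ hcomp
  have hs : A.s (φA g (A.e (H.s g))) = H.t g := by
    rw [hmp.compat_st _ _ hcomp, hmp.actH_id]
  have hidem : A.mul (φA g (A.e (H.s g))) (φA g (A.e (H.s g))) = φA g (A.e (H.s g)) := by
    have h := hmp.compat_mulA g (A.e (H.s g)) (A.e (H.s g)) hcomp (by rw [A.s_e, A.t_e])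
    rw [A.e_mul_e_s13, hmp.actH_id] at h
    exact h.symm
  rw [A.eq_e_of_mul_self (hs.trans ht.symm) hidem, hs]

theorem incA_mul (hmp : IsMatchedPair A H φA φH) {a b : A1} (hab : A.s a = A.t b) :
    incA A H (A.mul a b) = dcpMul A H φA φH (incA A H a) (incA A H b) := by
  simp only [incA, dcpMul, hab, hmp.act_id, hmp.actH_e, H.e_mul_e_s13, A.s_mul a b hab]

theorem incH_mul (hmp : IsMatchedPair A H φA φH) {g h : H1} (hgh : H.s g = H.t h) :
    incH A H (H.mul g h) = dcpMul A H φA φH (incH A H g) (incH A H h) := by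
  simp only [incH, dcpMul, ← hgh, hmp.actA_e, hmp.actH_id, A.e_mul_e_s13, H.t_mul g h hgh]

end IsMatchedPair

/-- For a matched pair of quasigroupoids, the canonical inclusions
`i^A(a) = (a, id_H(s_A a))` and `i^H(g) = (id_A(t_H g), g)` are quasigroupoid
monomorphisms into `A ⋈ H` (identity on objects): they are injective, land in the
arrows of `A ⋈ H`, commute with source, target and identities, and preserve the
product of composable arrows. Hence `A` and `H` are subquasigroupoids of `A ⋈ H`. -/
theorem inclusions_are_monomorphisms
    (A : Quasigroupoid O A1) (H : Quasigroupoid O H1)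
    (φA : H1 → A1 → A1) (φH : H1 → A1 → H1)
    (hmp : IsMatchedPair A H φA φH) :
    Function.Injective (incA A H) ∧
    Function.Injective (incH A H) ∧
    (∀ a, A.s (incA A H a).1 = H.t (incA A H a).2) ∧
    (∀ g, A.s (incH A H g).1 = H.t (incH A H g).2) ∧
    (∀ a, H.s (incA A H a).2 = A.s a) ∧
    (∀ a, A.t (incA A H a).1 = A.t a) ∧
    (∀ x, incA A H (A.e x) = (A.e x, H.e x)) ∧
    (∀ a b, A.s a = A.t b →
      incA A H (A.mul a b) = dcpMul A H φA φH (incA A H a) (incA A H b)) ∧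
    (∀ g, H.s (incH A H g).2 = H.s g) ∧
    (∀ g, A.t (incH A H g).1 = H.t g) ∧
    (∀ x, incH A H (H.e x) = (A.e x, H.e x)) ∧
    (∀ g h, H.s g = H.t h →
      incH A H (H.mul g h) = dcpMul A H φA φH (incH A H g) (incH A H h)) :=
  ⟨fun _ _ h => congrArg Prod.fst h,
    fun _ _ h => congrArg Prod.snd h,
    fun _ => (H.t_e _).symm,
    fun _ => A.s_e _,
    fun _ => H.s_e _,
    fun _ => rfl,
    fun x => by rw [incA, A.s_e],
    fun _ _ => hmp.incA_mul,
    fun _ => rfl,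
    fun _ => A.t_e _,
    fun x => by rw [incH, H.t_e],
    fun _ _ => hmp.incH_mul⟩
end
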